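/- (Key step in the proof of Theorem 2.) Suppose the Maximal Loss objective is unbounded from below over normalized portfolios, i.e. for every u ∈ ℝ there is a normalized portfolio w with ML(w|X) < u. Then there exists a normalized portfolio w* whose return strictly exceeds every single-asset return at every observation: ∑_j w*_j x_{jt} > x_{it} for all assets i and all observations t. In particular, w* strictly dominates each single-asset portfolio e_i (the i-th standard basis vector) on X at every observation. -/

import Mathlib

/-- The Maximal Loss (Minimax) objective of the portfolio `w` on the sample `X`:
the largest loss `-∑ i, w i * X i t` over the observations `t`. -/
noncomputable def ML {N T : ℕ} (X : Fin N → Fin T → ℝ) (w : Fin N → ℝ) : ℝ :=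
  ⨆ t, -(∑ i, w i * X i t)

/-! Since the sample has finitely many entries, they are bounded above by some `C`. A normalized
portfolio with Maximal Loss below `-C` then returns more than `C` at every observation, hence more
than any single asset. -/

theorem neg_portfolio_return_le_ML {N T : ℕ} (X : Fin N → Fin T → ℝ) (w : Fin N → ℝ) (t : Fin T) :
    -(∑ i, w i * X i t) ≤ ML X w :=
  le_ciSup (Finite.bddAbove_range fun t => -(∑ i, w i * X i t)) t

theorem lt_portfolio_return_of_ML_lt_neg {N T : ℕ} {X : Fin N → Fin T → ℝ} {w : Fin N → ℝ}
    {c : ℝ} (h : ML X w < -c) (t : Fin T) : c < ∑ i, w i * X i t := by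
  linarith [neg_portfolio_return_le_ML X w t]

theorem sum_single_mul_eq {N : ℕ} (i : Fin N) (x : Fin N → ℝ) :
    ∑ j, (Pi.single i 1 : Fin N → ℝ) j * x j = x i := by
  simp [Pi.single_apply]

theorem exists_portfolio_dominating_all_assets_general {N T : ℕ}
    (X : Fin N → Fin T → ℝ)
    (hub : ∀ u : ℝ, ∃ w : Fin N → ℝ, (∑ i, w i = 1) ∧ ML X w < u) :
    ∃ wstar : Fin N → ℝ, (∑ j, wstar j = 1) ∧
      (∀ i t, X i t < ∑ j, wstar j * X j t) ∧
      (∀ i t, ∑ j, (Pi.single i 1 : Fin N → ℝ) j * X j t < ∑ j, wstar j * X j t) := by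
  obtain ⟨C, hC⟩ := Finite.bddAbove_range fun p : Fin N × Fin T => X p.1 p.2
  obtain ⟨w, hw_sum, hw_ML⟩ := hub (-C)
  have dominates : ∀ i t, X i t < ∑ j, w j * X j t := fun i t =>
    (hC ⟨(i, t), rfl⟩).trans_lt (lt_portfolio_return_of_ML_lt_neg hw_ML t)
  refine ⟨w, hw_sum, dominates, fun i t => ?_⟩
  rw [sum_single_mul_eq i fun j => X j t]
  exact dominates i t

/-- Key step in the proof of Theorem 2: if Maximal Loss is unbounded from below over
normalized portfolios, then some normalized portfolio `w*` strictly outperforms every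
single asset at every observation; in particular `w*` strictly dominates each
single-asset portfolio `e i` at every observation. -/
theorem exists_portfolio_dominating_all_assets {N T : ℕ} (hN : 1 ≤ N) (hT : 1 ≤ T)
    (X : Fin N → Fin T → ℝ)
    (hub : ∀ u : ℝ, ∃ w : Fin N → ℝ, (∑ i, w i = 1) ∧ ML X w < u) :
    ∃ wstar : Fin N → ℝ, (∑ j, wstar j = 1) ∧
      (∀ i t, X i t < ∑ j, wstar j * X j t) ∧
      (∀ i t, ∑ j, (Pi.single i 1 : Fin N → ℝ) j * X j t < ∑ j, wstar j * X j t) :=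
  exists_portfolio_dominating_all_assets_general X hub
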